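/- Fix r and s with r = 2s+1, and suppose α(G(n,r,s)) ≤ C₀ n^s. Let Γ be a maximum independent set in the induced subgraph of G(n,r,s) on W, and let U₂ be the set of w ∈ W \ Γ with exactly two neighbors in Γ. Then |U₂| ≤ C₃ n^{2s} for a constant C₃ depending only on r and s. -/

import Mathlib

/-- The Johnson-type graph `G(n,r,s)`: vertices are the `r`-element subsets of
`{1,…,n}` (modeled as `Finset (Fin n)` of cardinality `r`), two distinct vertices
adjacent iff their intersection has size exactly `s`. -/
def johnson (n r s : ℕ) : SimpleGraph {A : Finset (Fin n) // A.card = r} where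
  Adj A B := A ≠ B ∧ (A.1 ∩ B.1).card = s
  symm := ⟨by
    intro A B h
    exact ⟨h.1.symm, by rw [Finset.inter_comm]; exact h.2⟩⟩
  loopless := ⟨by intro A h; exact h.1 rfl⟩

instance (n r s : ℕ) : DecidableRel (johnson n r s).Adj := fun A B =>
  inferInstanceAs (Decidable (A ≠ B ∧ (A.1 ∩ B.1).card = s))

/-- `Γ` is an independent set of vertices in `G`. -/
def IsIndep {V : Type*} (G : SimpleGraph V) (Γ : Finset V) : Prop :=
  ∀ x ∈ Γ, ∀ y ∈ Γ, ¬ G.Adj x y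

/-- The number of edges of `G` with both endpoints in `W`. -/
def edgeCount {V : Type*} [DecidableEq V] (G : SimpleGraph V) [DecidableRel G.Adj]
    (W : Finset V) : ℕ :=
  ((W ×ˢ W).filter fun p => G.Adj p.1 p.2).card / 2

/-!
Sort the `w ∈ W \ Γ` with two `Γ`-neighbours by their neighbourhood `P ⊆ Γ`. An independent set
`I` of such `w` with the same `P` has `|I| ≤ |P| = 2`, since `(Γ \ P) ∪ I` is independent and
`Γ` is maximum. Fix `x ∈ P`: every `w` of the fibre contains one of the `C(r,s)` sets `S ⊆ x` of
size `s`, and the members containing `S ∪ {u}` pairwise share more than `s` points, so they are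
independent and there are at most two of them for each `u`. Hence a fibre has at most `2 C(r,s) n`
members, and at most `2 C(r,s) r` unless some `S` lies in more than `2r` of them; then every
`z ∈ Γ` misses some such member outside `S`, which forces `P = {z ∈ Γ | S ⊆ z}`. Only `C(n,s)`
pairs are of that form, and there are `C(|Γ|,2) ≤ C₀² n^{2s}` pairs in all. For `s = 0` the
graph is complete, so `|Γ| ≤ 1`.
-/

open Finset

theorem Finset.card_le_card_mul_of_cover {α β : Type*} {t : Finset α} {U : Finset β}
    {p : β → α → Prop} [∀ u, DecidablePred (p u)] {k : ℕ}
    (hcover : ∀ a ∈ t, ∃ u ∈ U, p u a) (hk : ∀ u ∈ U, (t.filter (p u)).card ≤ k) :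
    t.card ≤ U.card * k := by
  classical
  calc t.card ≤ (U.biUnion fun u => t.filter (p u)).card := by
        refine card_le_card fun a ha => ?_
        obtain ⟨u, hu, hpu⟩ := hcover a ha
        exact mem_biUnion.2 ⟨u, hu, mem_filter.2 ⟨ha, hpu⟩⟩
    _ ≤ U.card * k := card_biUnion_le_card_mul _ _ _ hk

section MaxIndep

variable {V : Type*} (G : SimpleGraph V) [DecidableRel G.Adj]

def nbhdIn (Γ : Finset V) (w : V) : Finset V := Γ.filter fun x => G.Adj x w

def IsMaxIndepIn (W Γ : Finset V) : Prop :=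
  Γ ⊆ W ∧ IsIndep G Γ ∧ ∀ Γ' ⊆ W, IsIndep G Γ' → Γ'.card ≤ Γ.card

def nbhdFiber [DecidableEq V] (W Γ P : Finset V) : Finset V :=
  (W \ Γ).filter fun w => nbhdIn G Γ w = P

variable {G} {W Γ P I : Finset V}

@[simp]
theorem mem_nbhdIn {x w : V} : x ∈ nbhdIn G Γ w ↔ x ∈ Γ ∧ G.Adj x w := mem_filter

variable [DecidableEq V]

@[simp]
theorem mem_nbhdFiber {w : V} :
    w ∈ nbhdFiber G W Γ P ↔ (w ∈ W ∧ w ∉ Γ) ∧ nbhdIn G Γ w = P := by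
  simp [nbhdFiber]

theorem IsMaxIndepIn.card_le_of_subset_nbhdFiber (hΓ : IsMaxIndepIn G W Γ) (hI : IsIndep G I)
    (hIP : I ⊆ nbhdFiber G W Γ P) : I.card ≤ P.card := by
  obtain ⟨hΓW, hΓind, hmax⟩ := hΓ
  have hmem : ∀ w ∈ I, (w ∈ W ∧ w ∉ Γ) ∧ nbhdIn G Γ w = P :=
    fun w hw => mem_nbhdFiber.1 (hIP hw)
  have hnadj : ∀ a ∈ Γ \ P, ∀ b ∈ I, ¬ G.Adj a b := by
    intro a ha b hb hab
    rw [mem_sdiff, ← (hmem b hb).2] at ha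
    exact ha.2 (mem_nbhdIn.2 ⟨ha.1, hab⟩)
  have hindep : IsIndep G (Γ \ P ∪ I) := by
    intro a ha b hb
    rcases mem_union.1 ha with ha | ha <;> rcases mem_union.1 hb with hb | hb
    · exact hΓind a (mem_sdiff.1 ha).1 b (mem_sdiff.1 hb).1
    · exact hnadj a ha b hb
    · exact fun h => hnadj b hb a ha h.symm
    · exact hI a ha b hb
  have hsub : Γ \ P ∪ I ⊆ W :=
    union_subset (sdiff_subset.trans hΓW) fun w hw => (hmem w hw).1.1
  have hdisj : Disjoint (Γ \ P) I :=
    disjoint_left.2 fun a ha haI => (hmem a haI).1.2 (mem_sdiff.1 ha).1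
  have hswap := hmax _ hsub hindep
  rw [card_union_of_disjoint hdisj] at hswap
  have := le_card_sdiff P Γ
  omega

end MaxIndep

section Johnson

variable {n r s : ℕ} {W Γ P I : Finset {A : Finset (Fin n) // A.card = r}}

theorem isIndep_johnson_of_forall_superset {T : Finset (Fin n)} (hT : s < T.card)
    (hI : ∀ w ∈ I, T ⊆ w.1) : IsIndep (johnson n r s) I := by
  intro a ha b hb hab
  have := card_le_card (subset_inter (hI a ha) (hI b hb))
  rw [hab.2] at this
  omega

theorem card_le_one_of_isIndep_johnson_one_zero {Γ : Finset {A : Finset (Fin n) // A.card = 1}}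
    (hΓ : IsIndep (johnson n 1 0) Γ) : Γ.card ≤ 1 := by
  refine card_le_one.2 fun a ha b hb => ?_
  by_contra hab
  refine hΓ a ha b hb ⟨hab, card_eq_zero.2 ?_⟩
  by_contra hne
  have hcard : 1 ≤ (a.1 ∩ b.1).card := card_pos.2 (nonempty_iff_ne_empty.2 hne)
  have ha' := eq_of_subset_of_card_le inter_subset_left (a.2.trans_le hcard)
  have hb' := eq_of_subset_of_card_le inter_subset_right (b.2.trans_le hcard)
  exact hab (Subtype.ext (ha'.symm.trans hb'))

theorem exists_mem_powersetCard_subset_of_mem_nbhdFiber {x : {A : Finset (Fin n) // A.card = r}}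
    (hx : x ∈ P) {w : {A : Finset (Fin n) // A.card = r}}
    (hw : w ∈ nbhdFiber (johnson n r s) W Γ P) : ∃ S ∈ x.1.powersetCard s, S ⊆ w.1 := by
  rw [← (mem_nbhdFiber.1 hw).2, mem_nbhdIn] at hx
  exact ⟨x.1 ∩ w.1, mem_powersetCard.2 ⟨inter_subset_left, hx.2.2⟩, inter_subset_right⟩

namespace IsMaxIndepIn

theorem card_filter_superset_le_mul (hΓ : IsMaxIndepIn (johnson n r s) W Γ)
    {S U : Finset (Fin n)} (hS : S.card = s)
    (hcover : ∀ w ∈ (nbhdFiber (johnson n r s) W Γ P).filter (fun w => S ⊆ w.1),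
      ∃ u ∈ U \ S, u ∈ w.1) :
    ((nbhdFiber (johnson n r s) W Γ P).filter fun w => S ⊆ w.1).card ≤
      (U \ S).card * P.card := by
  refine card_le_card_mul_of_cover (p := fun u w => insert u S ⊆ w.1) (fun w hw => ?_) ?_
  · obtain ⟨u, hu, huw⟩ := hcover w hw
    exact ⟨u, hu, insert_subset huw (mem_filter.1 hw).2⟩
  · intro u hu
    refine hΓ.card_le_of_subset_nbhdFiber (isIndep_johnson_of_forall_superset (T := insert u S) ?_
      fun w hw => (mem_filter.1 hw).2) ((filter_subset _ _).trans (filter_subset _ _))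
    rw [card_insert_of_notMem (mem_sdiff.1 hu).2, hS]
    omega

theorem card_filter_superset_le (hΓ : IsMaxIndepIn (johnson n r s) W Γ) (hsr : s < r)
    {S : Finset (Fin n)} (hS : S.card = s) :
    ((nbhdFiber (johnson n r s) W Γ P).filter fun w => S ⊆ w.1).card ≤ n * P.card := by
  calc _ ≤ (univ \ S).card * P.card := by
        refine hΓ.card_filter_superset_le_mul hS fun w hw => ?_
        obtain ⟨u, huw, huS⟩ := exists_mem_notMem_of_card_lt_card (s := S) (t := w.1) (by omega)
        exact ⟨u, mem_sdiff.2 ⟨mem_univ u, huS⟩, huw⟩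
    _ ≤ n * P.card := by
        gcongr
        simpa using card_le_univ (univ \ S)

theorem exists_inter_subset_of_card_filter_superset_gt (hΓ : IsMaxIndepIn (johnson n r s) W Γ)
    {S : Finset (Fin n)} (hS : S.card = s)
    (hbig : r * P.card < ((nbhdFiber (johnson n r s) W Γ P).filter fun w => S ⊆ w.1).card)
    (z : {A : Finset (Fin n) // A.card = r}) :
    ∃ w ∈ (nbhdFiber (johnson n r s) W Γ P).filter (fun w => S ⊆ w.1), z.1 ∩ w.1 ⊆ S := by
  by_contra! hfar
  refine hbig.not_ge ?_
  calc _ ≤ (z.1 \ S).card * P.card := by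
        refine hΓ.card_filter_superset_le_mul hS fun w hw => ?_
        obtain ⟨u, hu, huS⟩ := not_subset.1 (hfar w hw)
        exact ⟨u, mem_sdiff.2 ⟨(mem_inter.1 hu).1, huS⟩, (mem_inter.1 hu).2⟩
    _ ≤ r * P.card := by
        gcongr
        exact (card_le_card sdiff_subset).trans_eq z.2

theorem filter_superset_eq_of_card_filter_superset_gt (hΓ : IsMaxIndepIn (johnson n r s) W Γ)
    {S : Finset (Fin n)} (hS : S.card = s)
    (hbig : r * P.card < ((nbhdFiber (johnson n r s) W Γ P).filter fun w => S ⊆ w.1).card) :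
    Γ.filter (fun z => S ⊆ z.1) = P := by
  ext z
  obtain ⟨w, hw, hzw⟩ := hΓ.exists_inter_subset_of_card_filter_superset_gt hS hbig z
  obtain ⟨hwF, hSw⟩ := mem_filter.1 hw
  obtain ⟨⟨-, hwΓ⟩, hwP⟩ := mem_nbhdFiber.1 hwF
  rw [mem_filter, ← hwP, mem_nbhdIn]
  constructor
  · rintro ⟨hzΓ, hSz⟩
    refine ⟨hzΓ, fun h => hwΓ (h ▸ hzΓ), ?_⟩
    rw [Subset.antisymm hzw (subset_inter hSz hSw), hS]
  · rintro ⟨hzΓ, -, hcard⟩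
    refine ⟨hzΓ, ?_⟩
    rw [← eq_of_subset_of_card_le hzw (by rw [hS, hcard])]
    exact inter_subset_left

theorem card_nbhdFiber_le (hΓ : IsMaxIndepIn (johnson n r s) W Γ) (hsr : s < r)
    {x : {A : Finset (Fin n) // A.card = r}} (hx : x ∈ P) :
    (nbhdFiber (johnson n r s) W Γ P).card ≤ r.choose s * (n * P.card) := by
  calc _ ≤ (x.1.powersetCard s).card * (n * P.card) :=
        card_le_card_mul_of_cover (fun _ => exists_mem_powersetCard_subset_of_mem_nbhdFiber hx)
          fun S hS => hΓ.card_filter_superset_le hsr (mem_powersetCard.1 hS).2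
    _ = _ := by rw [card_powersetCard, x.2]

theorem exists_filter_superset_eq_of_card_nbhdFiber_gt (hΓ : IsMaxIndepIn (johnson n r s) W Γ)
    {x : {A : Finset (Fin n) // A.card = r}} (hx : x ∈ P)
    (hbig : r.choose s * (r * P.card) < (nbhdFiber (johnson n r s) W Γ P).card) :
    ∃ S : Finset (Fin n), S.card = s ∧ Γ.filter (fun z => S ⊆ z.1) = P := by
  by_contra! hnone
  refine hbig.not_ge ?_
  calc _ ≤ (x.1.powersetCard s).card * (r * P.card) := by
        refine card_le_card_mul_of_cover
          (fun _ => exists_mem_powersetCard_subset_of_mem_nbhdFiber hx) fun S hS => ?_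
        have hS := (mem_powersetCard.1 hS).2
        exact not_lt.1 fun h => hnone S hS (hΓ.filter_superset_eq_of_card_filter_superset_gt hS h)
    _ = _ := by rw [card_powersetCard, x.2]

theorem card_filter_card_nbhdIn_eq_two_le (hΓ : IsMaxIndepIn (johnson n r s) W Γ)
    (hsr : s < r) :
    ((W \ Γ).filter fun w => (nbhdIn (johnson n r s) Γ w).card = 2).card ≤
      n.choose s * (r.choose s * (n * 2)) + Γ.card.choose 2 * (r.choose s * (r * 2)) := by
  set pairs := Γ.powersetCard 2
  set R := (univ.powersetCard s).image fun S : Finset (Fin n) => Γ.filter fun z => S ⊆ z.1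
  have hpair : ∀ P ∈ pairs, P.card = 2 ∧ P.Nonempty := fun P hP =>
    have hP := (mem_powersetCard.1 hP).2
    ⟨hP, card_pos.1 (by omega)⟩
  calc _ ≤ ∑ P ∈ pairs, (nbhdFiber (johnson n r s) W Γ P).card := by
        rw [card_eq_sum_card_fiberwise (f := nbhdIn (johnson n r s) Γ) (t := pairs)
          fun w hw => mem_powersetCard.2 ⟨filter_subset _ _, (mem_filter.1 hw).2⟩]
        refine sum_le_sum fun P _ => card_le_card fun w hw => ?_
        simp only [mem_filter] at hw
        exact mem_nbhdFiber.2 ⟨mem_sdiff.1 hw.1.1, hw.2⟩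
    _ = ∑ P ∈ pairs.filter (· ∈ R), (nbhdFiber (johnson n r s) W Γ P).card +
          ∑ P ∈ pairs.filter (· ∉ R), (nbhdFiber (johnson n r s) W Γ P).card :=
        (sum_filter_add_sum_filter_not _ _ _).symm
    _ ≤ (pairs.filter (· ∈ R)).card * (r.choose s * (n * 2)) +
          (pairs.filter (· ∉ R)).card * (r.choose s * (r * 2)) := by
        rw [← smul_eq_mul, ← smul_eq_mul]
        refine add_le_add (sum_le_card_nsmul _ _ _ fun P hP => ?_)
          (sum_le_card_nsmul _ _ _ fun P hP => ?_)
        · obtain ⟨hP2, x, hx⟩ := hpair P (mem_filter.1 hP).1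
          exact hP2 ▸ hΓ.card_nbhdFiber_le hsr hx
        · obtain ⟨hP, hPR⟩ := mem_filter.1 hP
          obtain ⟨hP2, x, hx⟩ := hpair P hP
          refine not_lt.1 fun hbig => hPR ?_
          obtain ⟨S, hS, hSP⟩ :=
            hΓ.exists_filter_superset_eq_of_card_nbhdFiber_gt hx (hP2 ▸ hbig)
          exact mem_image.2 ⟨S, mem_powersetCard.2 ⟨subset_univ S, hS⟩, hSP⟩
    _ ≤ _ := by
        gcongr
        · calc _ ≤ R.card := card_le_card fun P hP => (mem_filter.1 hP).2
            _ ≤ (univ.powersetCard s : Finset (Finset (Fin n))).card := card_image_le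
            _ = n.choose s := by simp
        · exact (card_filter_le _ _).trans_eq (card_powersetCard _ _)

end IsMaxIndepIn

end Johnson

theorem stmt6 (r s C₀ : ℕ) (hr : r = 2 * s + 1)
    (hα : ∀ n : ℕ, ∀ Γ : Finset {A : Finset (Fin n) // A.card = r},
      IsIndep (johnson n r s) Γ → Γ.card ≤ C₀ * n ^ s) :
    ∃ C₃ : ℕ, ∀ n : ℕ, ∀ W Γ : Finset {A : Finset (Fin n) // A.card = r},
      Γ ⊆ W → IsIndep (johnson n r s) Γ →
      (∀ Γ' ⊆ W, IsIndep (johnson n r s) Γ' → Γ'.card ≤ Γ.card) →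
      ((W \ Γ).filter
          (fun w => (Γ.filter (fun x => (johnson n r s).Adj x w)).card = 2)).card
        ≤ C₃ * n ^ (2 * s) := by
  obtain rfl | hs := Nat.eq_zero_or_pos s
  · subst hr
    refine ⟨0, fun n W Γ _ hind _ => ?_⟩
    have hΓ := card_le_one_of_isIndep_johnson_one_zero hind
    refine (card_eq_zero.2 (filter_eq_empty_iff.2 fun w _ h2 => ?_)).le
    have : 2 ≤ 1 := h2 ▸ (card_filter_le _ _).trans hΓ
    omega
  · refine ⟨2 * r.choose s + C₀ ^ 2 * (r.choose s * (r * 2)), fun n W Γ hΓW hind hmax => ?_⟩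
    calc _ ≤ n.choose s * (r.choose s * (n * 2)) +
            Γ.card.choose 2 * (r.choose s * (r * 2)) :=
          IsMaxIndepIn.card_filter_card_nbhdIn_eq_two_le ⟨hΓW, hind, hmax⟩ (by omega)
      _ ≤ n ^ s * (r.choose s * (n ^ s * 2)) + (C₀ * n ^ s) ^ 2 * (r.choose s * (r * 2)) := by
          gcongr
          · exact Nat.choose_le_pow n s
          · exact Nat.le_self_pow hs.ne' n
          · exact (Nat.choose_le_pow _ 2).trans (Nat.pow_le_pow_left (hα n Γ hind) 2)
      _ = _ := by ring
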